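/- Let 𝒜 = {A_1,…,A_K} be n×n matrices over 𝔽 (ℝ or ℂ) and f_𝒜(Q) = (1/2) Σ_k ‖J ∘ (Q^{-1}A_kQ)‖². Fix an invertible Q and set D_k = Q^{-1}A_kQ and G = Σ_{k=1}^K Q^{-*}[D_k^*, J ∘ D_k], where Q^{-*} = (Q^{-1})^*. Then G is the gradient of f_𝒜 at Q with respect to the real Frobenius inner product: for all matrices Z, df_𝒜|_Q(Z) = ⟨G, Z⟩_ℝ. -/

import Mathlib

/-
With `φ X = ∑_{i ≠ j} |X_ij|² = ‖J ∘ X‖²` we have `f_𝒜 Q = ½ ∑ₖ φ (Q⁻¹ Aₖ Q)`. The chain rule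
combines `dφ_D H = 2 ⟨H, J ∘ D⟩_ℝ` with the derivative `Z ↦ [D, Q⁻¹ Z]` of `Q ↦ Q⁻¹ A Q`
(from `d(Q⁻¹) Z = -Q⁻¹ Z Q⁻¹`). The gradient is read off by moving the operators acting on `Z`
across the Frobenius inner product: the adjoint of `ad D` is `ad D^*`, and that of `E ↦ Q⁻¹ E` is
`Y ↦ Q⁻* Y`.
-/

open Matrix

attribute [local instance] Matrix.frobeniusNormedAddCommGroup Matrix.frobeniusNormedSpace

variable {𝕜 : Type*} [RCLike 𝕜] {n K : ℕ}

/-- The real Frobenius inner product `⟨X,Y⟩_ℝ = Re ∑ᵢⱼ Xᵢⱼ conj(Yᵢⱼ)`. -/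
noncomputable def rinner (X Y : Matrix (Fin n) (Fin n) 𝕜) : ℝ :=
  RCLike.re (∑ i, ∑ j, X i j * (starRingEnd 𝕜) (Y i j))

/-- The off-diagonal part `J ∘ X`. -/
def offd (X : Matrix (Fin n) (Fin n) 𝕜) : Matrix (Fin n) (Fin n) 𝕜 :=
  fun i j => if i = j then 0 else X i j

/-- The cost functional `f_𝒜(Q) = (1/2) ∑ₖ ‖J ∘ (Q⁻¹AₖQ)‖²`. -/
noncomputable def costF (A : Fin K → Matrix (Fin n) (Fin n) 𝕜)
    (Q : Matrix (Fin n) (Fin n) 𝕜) : ℝ :=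
  (1 / 2) * ∑ k, ∑ i, ∑ j, if i ≠ j then ‖(Q⁻¹ * A k * Q) i j‖ ^ 2 else 0

attribute [local instance] Matrix.frobeniusNormedRing Matrix.frobeniusNormedAlgebra

open ContinuousLinearMap in
theorem hasFDerivAt_ringInverse_mul_mul {𝕜' R : Type*} [NontriviallyNormedField 𝕜'] [NormedRing R]
    [NormedAlgebra 𝕜' R] [HasSummableGeomSeries R] (u : Rˣ) (a : R) :
    HasFDerivAt (fun x => Ring.inverse x * a * x)
      ((mul 𝕜' R (↑u⁻¹ * a * u) - (mul 𝕜' R).flip (↑u⁻¹ * a * u)) ∘L mul 𝕜' R ↑u⁻¹) (u : R) := by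
  have h := ((hasFDerivAt_ringInverse (𝕜 := 𝕜') u).mul_const' a).mul' (hasFDerivAt_id (u : R))
  refine h.congr_fderiv (ContinuousLinearMap.ext fun w => ?_)
  simp [mul_assoc, sub_eq_add_neg]

theorem rinner_eq_re_trace (X Y : Matrix (Fin n) (Fin n) 𝕜) :
    rinner X Y = RCLike.re (Matrix.trace (Yᴴ * X)) := by
  simp only [rinner, Matrix.trace, Matrix.diag, Matrix.mul_apply, Matrix.conjTranspose_apply,
    RCLike.star_def, mul_comm (X _ _)]
  rw [Finset.sum_comm]

theorem rinner_comm (X Y : Matrix (Fin n) (Fin n) 𝕜) : rinner X Y = rinner Y X := by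
  simp only [rinner, map_sum]
  refine Finset.sum_congr rfl fun i _ => Finset.sum_congr rfl fun j _ => ?_
  rw [← RCLike.conj_re, map_mul, RCLike.conj_conj, mul_comm]

theorem rinner_mul_left (M X Y : Matrix (Fin n) (Fin n) 𝕜) :
    rinner (M * X) Y = rinner X (Mᴴ * Y) := by
  rw [rinner_eq_re_trace, rinner_eq_re_trace, Matrix.conjTranspose_mul,
    Matrix.conjTranspose_conjTranspose, Matrix.mul_assoc]

theorem rinner_mul_right (M X Y : Matrix (Fin n) (Fin n) 𝕜) :
    rinner (X * M) Y = rinner X (Y * Mᴴ) := by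
  rw [rinner_eq_re_trace, rinner_eq_re_trace, Matrix.conjTranspose_mul,
    Matrix.conjTranspose_conjTranspose, ← Matrix.mul_assoc, Matrix.trace_mul_comm, Matrix.mul_assoc]

theorem rinner_sub_left (X X' Y : Matrix (Fin n) (Fin n) 𝕜) :
    rinner (X - X') Y = rinner X Y - rinner X' Y := by
  simp [rinner, sub_mul, Finset.sum_sub_distrib]

theorem rinner_sub_right (X Y Y' : Matrix (Fin n) (Fin n) 𝕜) :
    rinner X (Y - Y') = rinner X Y - rinner X Y' := by
  simp [rinner, mul_sub, Finset.sum_sub_distrib]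

theorem rinner_sum_left {ι : Type*} (s : Finset ι) (X : ι → Matrix (Fin n) (Fin n) 𝕜)
    (Y : Matrix (Fin n) (Fin n) 𝕜) : rinner (∑ k ∈ s, X k) Y = ∑ k ∈ s, rinner (X k) Y := by
  simp only [rinner_eq_re_trace, Matrix.mul_sum, Matrix.trace_sum, map_sum]

theorem rinner_commutator_left (D E Y : Matrix (Fin n) (Fin n) 𝕜) :
    rinner (D * E - E * D) Y = rinner E (Dᴴ * Y - Y * Dᴴ) := by
  rw [rinner_sub_left, rinner_sub_right, rinner_mul_left, rinner_mul_right]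

noncomputable def entryCLM (i j : Fin n) : Matrix (Fin n) (Fin n) 𝕜 →L[ℝ] 𝕜 :=
  LinearMap.toContinuousLinearMap (Matrix.entryLinearMap ℝ 𝕜 i j)

noncomputable def rinnerCLM (Y : Matrix (Fin n) (Fin n) 𝕜) : Matrix (Fin n) (Fin n) 𝕜 →L[ℝ] ℝ :=
  LinearMap.toContinuousLinearMap
    { toFun := fun X => rinner X Y
      map_add' := fun X X' => by simp [rinner, add_mul, Finset.sum_add_distrib]
      map_smul' := fun r X => by
        simp only [rinner, Matrix.smul_apply, smul_mul_assoc, ← Finset.smul_sum, RCLike.smul_re,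
          RingHom.id_apply, smul_eq_mul] }

@[simp]
theorem entryCLM_apply (i j : Fin n) (X : Matrix (Fin n) (Fin n) 𝕜) : entryCLM i j X = X i j :=
  rfl

@[simp]
theorem rinnerCLM_apply (X Y : Matrix (Fin n) (Fin n) 𝕜) : rinnerCLM Y X = rinner X Y :=
  rfl

def offDiagNormSq (X : Matrix (Fin n) (Fin n) 𝕜) : ℝ :=
  ∑ i, ∑ j, if i ≠ j then ‖X i j‖ ^ 2 else 0

theorem hasFDerivAt_offDiagNormSq (D : Matrix (Fin n) (Fin n) 𝕜) :
    HasFDerivAt offDiagNormSq (2 • rinnerCLM (offd D)) D := by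
  have hterm : ∀ i j, HasFDerivAt
      (fun X : Matrix (Fin n) (Fin n) 𝕜 => if i ≠ j then ‖X i j‖ ^ 2 else 0)
      (2 • (innerSL ℝ (offd D i j)).comp (entryCLM i j)) D := by
    intro i j
    by_cases hij : i = j
    · simpa [hij, offd] using hasFDerivAt_const (0 : ℝ) D
    · simp only [hij, offd, ne_eq, not_false_eq_true, if_true, if_false]
      exact ((entryCLM (𝕜 := 𝕜) i j).hasFDerivAt (x := D)).norm_sq
  -- The ascription elaborates the sum over the plain `Matrix` instances used by `rinnerCLM`;
  -- over the Frobenius ones `simp` could not evaluate it.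
  have hsum : ∑ i, ∑ j, (2 • (innerSL ℝ (offd D i j)).comp (entryCLM i j) :
      Matrix (Fin n) (Fin n) 𝕜 →L[ℝ] ℝ) = 2 • rinnerCLM (offd D) := by
    ext H
    simp only [FunLike.coe_sum, Finset.sum_apply, _root_.smul_apply, ContinuousLinearMap.comp_apply,
      innerSL_apply_apply, entryCLM_apply, rinnerCLM_apply, rinner, map_sum, Finset.smul_sum]
    refine Finset.sum_congr rfl fun i _ => Finset.sum_congr rfl fun j _ => ?_
    rw [real_inner_eq_re_inner 𝕜, RCLike.inner_apply, mul_comm]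
  exact (HasFDerivAt.fun_sum fun i _ => HasFDerivAt.fun_sum fun j _ => hterm i j).congr_fderiv hsum

open ContinuousLinearMap in
theorem Matrix.hasFDerivAt_nonsing_inv_mul_mul {Q : Matrix (Fin n) (Fin n) 𝕜} (hQ : IsUnit Q)
    (A : Matrix (Fin n) (Fin n) 𝕜) :
    HasFDerivAt (fun X : Matrix (Fin n) (Fin n) 𝕜 => X⁻¹ * A * X)
      ((mul ℝ _ (Q⁻¹ * A * Q) - (mul ℝ _).flip (Q⁻¹ * A * Q)) ∘L mul ℝ _ Q⁻¹) Q := by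
  have : CompleteSpace (Matrix (Fin n) (Fin n) 𝕜) := FiniteDimensional.complete ℝ _
  obtain ⟨u, rfl⟩ := hQ
  simp only [Matrix.nonsing_inv_eq_ringInverse, Ring.inverse_unit]
  exact hasFDerivAt_ringInverse_mul_mul u A

open ContinuousLinearMap in
theorem fderiv_costF_apply (A : Fin K → Matrix (Fin n) (Fin n) 𝕜) {Q : Matrix (Fin n) (Fin n) 𝕜}
    (hQ : IsUnit Q) (Z : Matrix (Fin n) (Fin n) 𝕜) :
    fderiv ℝ (costF A) Q Z = ∑ k, rinner (Q⁻¹ * A k * Q * (Q⁻¹ * Z) - Q⁻¹ * Z * (Q⁻¹ * A k * Q))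
      (offd (Q⁻¹ * A k * Q)) := by
  -- `costF A X` unfolds to `1/2 * ∑ k, offDiagNormSq (X⁻¹ * A k * X)`; the ascription is as in
  -- `hasFDerivAt_offDiagNormSq`.
  have h : HasFDerivAt (costF A) ((1 / 2 : ℝ) • ∑ k, (2 • rinnerCLM (offd (Q⁻¹ * A k * Q))).comp
      ((mul ℝ _ (Q⁻¹ * A k * Q) - (mul ℝ _).flip (Q⁻¹ * A k * Q)) ∘L mul ℝ _ Q⁻¹) :
        Matrix (Fin n) (Fin n) 𝕜 →L[ℝ] ℝ) Q :=
    (HasFDerivAt.fun_sum fun k _ => (hasFDerivAt_offDiagNormSq _).comp Q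
      (Matrix.hasFDerivAt_nonsing_inv_mul_mul hQ (A k))).const_mul (1 / 2 : ℝ)
  refine (congrArg (fun L => L Z) h.fderiv).trans ?_
  simp only [one_div, smul_comp, _root_.smul_apply, _root_.sum_apply,
    ContinuousLinearMap.comp_apply, rinnerCLM_apply, nsmul_eq_mul, Nat.cast_ofNat, smul_eq_mul,
    Finset.mul_sum, ne_eq, OfNat.ofNat_ne_zero, not_false_eq_true, inv_mul_cancel_left₀]
  rfl

/-- with `D_k = Q⁻¹AₖQ`, the matrix `G = ∑ₖ Q⁻*[D_k^*, J ∘ D_k]` is the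
gradient of `f_𝒜` at `Q` for the real Frobenius inner product:
`df_𝒜|_Q(Z) = ⟨G, Z⟩_ℝ` for all `Z`. -/
theorem gradient_costF (A : Fin K → Matrix (Fin n) (Fin n) 𝕜)
    (Q : Matrix (Fin n) (Fin n) 𝕜) (hQ : IsUnit Q)
    (D : Fin K → Matrix (Fin n) (Fin n) 𝕜) (hD : ∀ k, D k = Q⁻¹ * A k * Q)
    (G : Matrix (Fin n) (Fin n) 𝕜)
    (hG : G = ∑ k, (Q⁻¹)ᴴ * ((D k)ᴴ * offd (D k) - offd (D k) * (D k)ᴴ)) :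
    ∀ Z : Matrix (Fin n) (Fin n) 𝕜, fderiv ℝ (costF A) Q Z = rinner G Z := by
  intro Z
  subst hG
  rw [fderiv_costF_apply A hQ, rinner_sum_left]
  refine Finset.sum_congr rfl fun k _ => ?_
  rw [← hD k, rinner_commutator_left, rinner_mul_left, rinner_comm]
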